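/- arXiv:1803.09322 — 2 statements merged into one kernel-verified Lean document; each statement's English description precedes it below -/
import Mathlib

section
/- Let A_1,…,A_n be finite multisets and A = A_1 ∪ ⋯ ∪ A_n their indexed multiset union. Let T be a reduced tree with leaves in A which is mixing for this division and has height at least 2, and let T_1,…,T_r be the subtrees obtained by deleting the root of T. Then for any gap-free colourings c_1,…,c_r of T_1,…,T_r respectively, Σ over c ∈ C_T with p_i(c) = c_i for all i ∈ {1,…,r} of (−1)^{|c|} equals −Π_{i=1}^r (−1)^{|c_i|}. -/
open Finset

/-! ### Algebras with two multiplications -/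

/-- An algebra with two multiplications: an `R`-module `A` equipped with two `R`-bilinear,
commutative, associative multiplications `dot` and `star` sharing a common unit `one`. -/
structure TwoMulAlg (R : Type*) (A : Type*) [CommRing R] [AddCommGroup A] [Module R A] where
  dot : A → A → A
  star : A → A → A
  one : A
  dot_comm : ∀ x y, dot x y = dot y x
  dot_assoc : ∀ x y z, dot (dot x y) z = dot x (dot y z)
  star_comm : ∀ x y, star x y = star y x
  star_assoc : ∀ x y z, star (star x y) z = star x (star y z)
  dot_one : ∀ x, dot x one = x
  star_one : ∀ x, star x one = x
  dot_add : ∀ x y z, dot (x + y) z = dot x z + dot y z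
  star_add : ∀ x y z, star (x + y) z = star x z + star y z
  dot_smul : ∀ (r : R) (x y : A), dot (r • x) y = r • dot x y
  star_smul : ∀ (r : R) (x y : A), star (r • x) y = r • star x y

namespace TwoMulAlg

variable {R : Type*} {A : Type*} [CommRing R] [AddCommGroup A] [Module R A]

/-- The `·`-product of the values of `f` over a finite set `s`. -/
def dotProd (T : TwoMulAlg R A) {ι : Type*} (s : Finset ι) (f : ι → A) : A :=
  @Finset.fold ι A T.dot ⟨T.dot_comm⟩ ⟨T.dot_assoc⟩ T.one f s

/-- The `∗`-product of the values of `f` over a finite set `s`. -/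
def starProd (T : TwoMulAlg R A) {ι : Type*} (s : Finset ι) (f : ι → A) : A :=
  @Finset.fold ι A T.star ⟨T.star_comm⟩ ⟨T.star_assoc⟩ T.one f s

/-- The same algebra with the roles of the two multiplications exchanged. -/
def swap (T : TwoMulAlg R A) : TwoMulAlg R A :=
  ⟨T.star, T.dot, T.one, T.star_comm, T.star_assoc, T.dot_comm, T.dot_assoc,
    T.star_one, T.dot_one, T.star_add, T.dot_add, T.star_smul, T.dot_smul⟩

end TwoMulAlg

/-- `k : Multiset A → A` is *the* family of cumulants of the identity map
`(A, ·) → (A, ∗)`: it is symmetric (being defined on multisets), satisfies `κ(a) = a`,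
and the moment–cumulant formula: for every finite family `a : Fin m → A`, the `∗`-product
of the family equals the sum, over all set partitions `ν` of `{1, …, m}`, of the
`·`-product over the blocks `b` of `ν` of the cumulants of the subfamilies. -/
def IsCumulant {R : Type*} {A : Type*} [CommRing R] [AddCommGroup A] [Module R A]
    (T : TwoMulAlg R A) (k : Multiset A → A) : Prop :=
  (∀ a : A, k {a} = a) ∧
  ∀ (m : ℕ) (a : Fin m → A),
    T.starProd Finset.univ a =
      ∑ᶠ ν : Finpartition (Finset.univ : Finset (Fin m)),
        T.dotProd ν.parts fun b => k (Multiset.map a b.val)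

section Forests

variable {ι : Type*} [DecidableEq ι]

/-!  A reduced forest with set of leaves a finite (ground) set `b` is encoded by the family
`F` of the sets of leaves lying below its internal vertices: this family is *laminar*
(any two members are nested or disjoint) and each member has at least two elements
(this corresponds to every internal vertex having at least two children).  The vertices of
the forest are identified with the corresponding sets of leaves: the singletons `{x}`, `x ∈ b`,
are the leaves and the members of `F` are the internal vertices. -/

/-- The vertices of the reduced forest `F` on the ground set `b`, viewed as subsets of `b`:
the singletons (leaves) together with the members of `F` (internal vertices). -/
def forestVerts (b : Finset ι) (F : Finset (Finset ι)) : Finset (Finset ι) :=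
  F ∪ b.image fun x => ({x} : Finset ι)

/-- `F` encodes a reduced forest with leaves (bijectively labelled by) `b`:
each internal vertex covers at least two leaves, i.e. has at least two children. -/
def IsReducedForest (b : Finset ι) (F : Finset (Finset ι)) : Prop :=
  (∀ s ∈ F, s ⊆ b ∧ 2 ≤ s.card) ∧
    ∀ s ∈ F, ∀ t ∈ F, s ⊆ t ∨ t ⊆ s ∨ Disjoint s t

/-- `t` is a child of `s` in the forest `F` on ground set `b`. -/
def IsChildV (b : Finset ι) (F : Finset (Finset ι)) (t s : Finset ι) : Prop :=
  t ∈ forestVerts b F ∧ s ∈ forestVerts b F ∧ t ⊂ s ∧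
    ∀ u ∈ forestVerts b F, ¬(t ⊂ u ∧ u ⊂ s)

/-- The children of the vertex `s` in the forest `F` on ground set `b`. -/
def childrenF (b : Finset ι) (F : Finset (Finset ι)) (s : Finset ι) : Finset (Finset ι) :=
  (forestVerts b F).filter fun t => t ⊂ s ∧ ∀ u ∈ forestVerts b F, ¬(t ⊂ u ∧ u ⊂ s)

/-- The roots (maximal vertices) of the forest `F` on ground set `b`. -/
def rootsF (b : Finset ι) (F : Finset (Finset ι)) : Finset (Finset ι) :=
  (forestVerts b F).filter fun s => ∀ u ∈ forestVerts b F, ¬s ⊂ u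

/-- The forest `F` consists of a single tree. -/
def IsTreeF (b : Finset ι) (F : Finset (Finset ι)) : Prop :=
  b ∈ forestVerts b F

/-- The number of internal vertices of the forest `F`. -/
def wForest (F : Finset (Finset ι)) : ℕ := F.card

/-- The height of the forest `F` on ground set `b` (the maximal distance from a root
to a leaf below it). -/
def forestHeight (b : Finset ι) (F : Finset (Finset ι)) : ℕ :=
  b.sup fun x => (F.filter fun s => x ∈ s).card

variable {A : Type*}

/-- The cumulant `κ_v` attached to a vertex `v` of the forest `F` (with leaves `b`
labelled by `a`): it is `a x` on a leaf `{x}` and `k` applied to the cumulants of the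
children on an internal vertex. -/
noncomputable def kappaVert (k : Multiset A → A) (b : Finset ι) (F : Finset (Finset ι))
    (a : ι → A) : Finset ι → A := fun s =>
  if h : s.card = 1 then a (Finset.card_eq_one.mp h).choose
  else k (Multiset.map (fun t => kappaVert k b F a t.1) (childrenF b F s).attach.val)
termination_by s => s.card
decreasing_by
  have ht := (Finset.mem_filter.mp t.2).2.1
  exact Finset.card_lt_card ht

end Forests

/-- The cumulant `κ_F` of the forest `F`: the `∗`-product of the cumulants of its roots. -/
noncomputable def kappaForest {R : Type*} {A : Type*} [CommRing R] [AddCommGroup A]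
    [Module R A] {ι : Type*} [DecidableEq ι] (T : TwoMulAlg R A) (k : Multiset A → A)
    (b : Finset ι) (F : Finset (Finset ι)) (a : ι → A) : A :=
  T.starProd (rootsF b F) (kappaVert k b F a)

section Mixing

variable {ι : Type*} [DecidableEq ι] {n : ℕ}

/-- The forest `F` is *mixing* for the division of its leaves given by `part`:
every internal vertex all of whose children are leaves has two children (leaves)
belonging to distinct multisets. -/
def IsMixingForest (b : Finset ι) (F : Finset (Finset ι)) (part : ι → Fin n) : Prop :=
  ∀ s ∈ F, (∀ t ∈ F, ¬t ⊂ s) → ∃ x ∈ s, ∃ y ∈ s, part x ≠ part y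

/-- `lam` determines a *row partition* `{lam, b \ lam}` of the ground set `b` for the
division given by `part`: both parts are nonempty and every fiber of `part` (i.e. every
multiset `A_i`) is contained in one of the two parts. -/
def IsRowSplit (b : Finset ι) (part : ι → Fin n) (lam : Finset ι) : Prop :=
  lam ⊆ b ∧ lam.Nonempty ∧ (b \ lam).Nonempty ∧
    ∀ i : Fin n, (b.filter fun x => part x = i) ⊆ lam ∨
      (b.filter fun x => part x = i) ⊆ b \ lam

/-- A set partition `ν` of `b` is *mixing* if some block is contained in no single
multiset `A_i`. -/
def IsMixingPartition (b : Finset ι) (ν : Finpartition b) (part : ι → Fin n) : Prop :=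
  ∃ c ∈ ν.parts, ∀ i : Fin n, ¬c ⊆ b.filter fun x => part x = i

/-- A set partition `ν` of `b` is *strongly mixing* if there is no row partition such that
every block of `ν` is contained in one of the two rows. -/
def IsStronglyMixingPartition (b : Finset ι) (ν : Finpartition b) (part : ι → Fin n) : Prop :=
  ¬∃ lam : Finset ι, IsRowSplit b part lam ∧
    ∀ c ∈ ν.parts, c ⊆ lam ∨ c ⊆ b \ lam

/-- A forest is *strongly mixing* if it is mixing and the partition of the leaves into the
leaf sets of its trees (i.e. of its roots) is strongly mixing. -/
def IsStronglyMixingForest (b : Finset ι) (F : Finset (Finset ι)) (part : ι → Fin n) : Prop :=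
  IsMixingForest b F part ∧
    ¬∃ lam : Finset ι, IsRowSplit b part lam ∧
      ∀ s ∈ rootsF b F, s ⊆ lam ∨ s ⊆ b \ lam

/-- `c` is a gap-free vertex colouring of length `r` of the forest `F` on ground set `b`:
each vertex gets a colour in `{0, …, r}`, each colour is used, each leaf is coloured `0`
and the colours strictly increase on any path from a leaf to a root.  (As a normalisation,
non-vertices get the colour `0`.) -/
def IsGapFreeColouring (b : Finset ι) (F : Finset (Finset ι)) (c : Finset ι → ℕ) (r : ℕ) :
    Prop :=
  (∀ s ∈ forestVerts b F, c s ≤ r) ∧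
  (∀ j ≤ r, ∃ s ∈ forestVerts b F, c s = j) ∧
  (∀ x ∈ b, c {x} = 0) ∧
  (∀ t s : Finset ι, IsChildV b F t s → c t < c s) ∧
  (∀ s : Finset ι, s ∉ forestVerts b F → c s = 0)

/-- A colouring is *weakly mixing* if either the colour `1` is not used at all, or some
vertex of colour `1` has two children which are leaves belonging to distinct multisets. -/
def IsWeaklyMixing (b : Finset ι) (F : Finset (Finset ι)) (part : ι → Fin n)
    (c : Finset ι → ℕ) : Prop :=
  (∀ s ∈ forestVerts b F, c s ≠ 1) ∨
    ∃ s ∈ forestVerts b F, c s = 1 ∧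
      ∃ x y : ι, IsChildV b F {x} s ∧ IsChildV b F {y} s ∧ part x ≠ part y

/-- The set `C_F` of gap-free, weakly mixing colourings of the forest `F` (a colouring is
recorded as a pair: the colour function together with its length). -/
def ColouringSet (b : Finset ι) (F : Finset (Finset ι)) (part : ι → Fin n) :
    Set ((Finset ι → ℕ) × ℕ) :=
  {p | IsGapFreeColouring b F p.1 p.2 ∧ IsWeaklyMixing b F part p.1}

/-- The signed count `Σ_{c ∈ C_F} (-1)^{|c|}` of the gap-free weakly mixing colourings
of the forest `F`. -/
noncomputable def colourSum (b : Finset ι) (F : Finset (Finset ι)) (part : ι → Fin n) : ℤ :=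
  ∑ᶠ p ∈ ColouringSet b F part, (-1 : ℤ) ^ p.2

/-- The projection of a colouring `c` onto the subtree of `F` with ground set `b`:
restrict `c` to the vertices and relabel the used colours order-preservingly by
`0, 1, 2, …`. -/
def projColouring (b : Finset ι) (F : Finset (Finset ι)) (c : Finset ι → ℕ) :
    (Finset ι → ℕ) × ℕ :=
  ((fun s => if s ∈ forestVerts b F then
      (((forestVerts b F).image c).sort (· ≤ ·)).idxOf (c s) else 0),
    ((forestVerts b F).image c).card - 1)

end Mixing

section UpSeq

variable {ι : Type*} [DecidableEq ι] {b : Finset ι} {A : Type*} {n : ℕ}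

/-- The value attached to a block `c` of the top partition of an upward sequence of
partitions; the list records the earlier (finer) partitions, from the latest to the
earliest.  On the empty list (a block of the first partition) it is the cumulant of the
labels of the elements of the block; on `p :: rest` it is the cumulant of the values of
the blocks of `p` contained in `c`. -/
def levelVal (k : Multiset A → A) (a : ι → A) : List (Finpartition b) → Finset ι → A
  | [], c => k (Multiset.map a c.val)
  | p :: rest, c => k (Multiset.map (levelVal k a rest) (p.parts.filter fun d => d ⊆ c).val)

/-- The cumulant `κ_ω` of a (nonempty) upward sequence of partitions
`ω = [ν¹, …, νʳ]`: the `∗`-product over the blocks of `νʳ` of the iterated cumulants. -/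
def kappaUpSeq {R : Type*} [CommRing R] [AddCommGroup A] [Module R A] (T : TwoMulAlg R A)
    (k : Multiset A → A) (a : ι → A) (ω : List (Finpartition b)) : A :=
  match ω.reverse with
  | [] => T.one
  | p :: rest => T.starProd p.parts (levelVal k a rest)

/-- The set `P↗(A)` of nested upward sequences of partitions starting from a mixing
partition.  An upward sequence is encoded by the induced chain `ν¹ ≤ ν² ≤ ⋯` of
partitions of the ground set `b` (`≤` being the refinement order); nestedness means the
chain is strictly increasing. -/
def UpSeqSet (b : Finset ι) (part : ι → Fin n) : Set (List (Finpartition b)) :=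
  {ω | ω ≠ [] ∧ List.Chain' (· < ·) ω ∧ ∀ p ∈ ω.head?, IsMixingPartition b p part}

end UpSeq

namespace Stmt15Aux

open Finset

section Generic

variable {ι : Type*} [DecidableEq ι]

lemma mem_forestVerts {b : Finset ι} {F : Finset (Finset ι)} {s : Finset ι} :
    s ∈ forestVerts b F ↔ s ∈ F ∨ ∃ x ∈ b, s = {x} := by
  simp [forestVerts, eq_comm]

lemma singleton_mem_forestVerts {b : Finset ι} {F : Finset (Finset ι)} {x : ι} (hx : x ∈ b) :
    ({x} : Finset ι) ∈ forestVerts b F :=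
  mem_forestVerts.2 (Or.inr ⟨x, hx, rfl⟩)

lemma F_subset_forestVerts {b : Finset ι} {F : Finset (Finset ι)} :
    F ⊆ forestVerts b F := fun s hs => mem_forestVerts.2 (Or.inl hs)

lemma vert_nonempty {b : Finset ι} {F : Finset (Finset ι)} (hred : IsReducedForest b F)
    {s : Finset ι} (hs : s ∈ forestVerts b F) : s.Nonempty := by
  rcases mem_forestVerts.1 hs with h | ⟨x, _, rfl⟩
  · have := (hred.1 s h).2
    exact Finset.card_pos.1 (by omega)
  · exact ⟨x, mem_singleton_self x⟩

lemma vert_subset {b : Finset ι} {F : Finset (Finset ι)} (hred : IsReducedForest b F)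
    {s : Finset ι} (hs : s ∈ forestVerts b F) : s ⊆ b := by
  rcases mem_forestVerts.1 hs with h | ⟨x, hx, rfl⟩
  · exact (hred.1 s h).1
  · simpa using hx

lemma verts_laminar {b : Finset ι} {F : Finset (Finset ι)} (hred : IsReducedForest b F)
    {s t : Finset ι} (hs : s ∈ forestVerts b F) (ht : t ∈ forestVerts b F) :
    s ⊆ t ∨ t ⊆ s ∨ Disjoint s t := by
  rcases mem_forestVerts.1 hs with h | ⟨x, _, rfl⟩
  · rcases mem_forestVerts.1 ht with h' | ⟨y, _, rfl⟩
    · exact hred.2 s h t h'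
    · by_cases hy : y ∈ s
      · exact Or.inr (Or.inl (by simpa using hy))
      · exact Or.inr (Or.inr (by simpa using hy))
  · by_cases hx : x ∈ t
    · exact Or.inl (by simpa using hx)
    · exact Or.inr (Or.inr (by simpa using hx))

lemma exists_child {b : Finset ι} {F : Finset (Finset ι)} {v u : Finset ι}
    (hv : v ∈ forestVerts b F) (hu : u ∈ forestVerts b F) (hvu : v ⊂ u) :
    ∃ t, v ⊆ t ∧ IsChildV b F t u := by
  classical
  set P := (forestVerts b F).filter (fun t => v ⊆ t ∧ t ⊂ u) with hP
  have hne : P.Nonempty := ⟨v, by simp [hP, hv, hvu]⟩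
  obtain ⟨t, ht, hmax⟩ := P.exists_max_image (fun t => t.card) hne
  simp only [hP, mem_filter] at ht
  refine ⟨t, ht.2.1, ht.1, hu, ht.2.2, ?_⟩
  rintro w hw ⟨h1, h2⟩
  have hwP : w ∈ P := by
    simp only [hP, mem_filter]
    exact ⟨hw, ht.2.1.trans h1.subset, h2⟩
  exact absurd (hmax w hwP) (Finset.card_lt_card h1).not_ge

lemma col_lt {b : Finset ι} {F : Finset (Finset ι)} {c : Finset ι → ℕ}
    (hc4 : ∀ t s : Finset ι, IsChildV b F t s → c t < c s) :
    ∀ u ∈ forestVerts b F, ∀ v ∈ forestVerts b F, v ⊂ u → c v < c u := by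
  intro u
  induction u using Finset.strongInduction with
  | _ u ih =>
    intro hu v hv hvu
    obtain ⟨t, hvt, hchild⟩ := exists_child hv hu hvu
    have htu := hc4 t u hchild
    rcases eq_or_lt_of_le (Finset.le_iff_subset.2 hvt) with rfl | hlt
    · exact htu
    · exact (ih t hchild.2.2.1 hchild.1 v hv hlt).trans htu

lemma col_internal_pos {b : Finset ι} {F : Finset (Finset ι)} {c : Finset ι → ℕ} {r : ℕ}
    (hred : IsReducedForest b F) (hc : IsGapFreeColouring b F c r)
    {s : Finset ι} (hs : s ∈ F) : 1 ≤ c s := by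
  obtain ⟨x, hx⟩ := vert_nonempty hred (F_subset_forestVerts hs)
  have hxb : x ∈ b := (hred.1 s hs).1 hx
  have hsub : ({x} : Finset ι) ⊂ s := by
    refine Finset.ssubset_iff_subset_ne.2 ⟨by simpa using hx, ?_⟩
    intro h
    have := (hred.1 s hs).2
    rw [← h] at this
    simp at this
  have h0 : c {x} = 0 := hc.2.2.1 x hxb
  have := col_lt hc.2.2.2.1 s (F_subset_forestVerts hs) {x} (singleton_mem_forestVerts hxb) hsub
  omega

lemma col_root {b : Finset ι} {F : Finset (Finset ι)} {c : Finset ι → ℕ} {r : ℕ}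
    (hred : IsReducedForest b F) (htree : IsTreeF b F) (hc : IsGapFreeColouring b F c r) :
    c b = r := by
  obtain ⟨w, hw, hwr⟩ := hc.2.1 r le_rfl
  rcases eq_or_ne w b with rfl | hne
  · exact hwr
  · have hsub : w ⊂ b := Finset.ssubset_iff_subset_ne.2 ⟨vert_subset hred hw, hne⟩
    have := col_lt hc.2.2.2.1 b htree w hw hsub
    have := hc.1 b htree
    omega

lemma col_lt_root {b : Finset ι} {F : Finset (Finset ι)} {c : Finset ι → ℕ} {r : ℕ}
    (hred : IsReducedForest b F) (htree : IsTreeF b F) (hc : IsGapFreeColouring b F c r)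
    {v : Finset ι} (hv : v ∈ forestVerts b F) (hne : v ≠ b) : c v < r := by
  have hsub : v ⊂ b := Finset.ssubset_iff_subset_ne.2 ⟨vert_subset hred hv, hne⟩
  have := col_lt hc.2.2.2.1 b htree v hv hsub
  rw [col_root hred htree hc] at this
  exact this

end Generic

section Words

variable {β : Type*} [DecidableEq β]

/-- Words: lists of nonempty finsets (letters) with prescribed content `M`. -/
def WordsSet (M : Multiset β) : Set (List (Finset β)) :=
  {L | (∀ U ∈ L, U.Nonempty) ∧ (L.map Finset.val).sum = M}

lemma count_sum_map (L : List (Finset β)) (s : β) :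
    Multiset.count s (L.map Finset.val).sum = L.countP (fun U => decide (s ∈ U)) := by
  induction L with
  | nil => simp
  | cons U L ih =>
    simp only [List.map_cons, List.sum_cons, Multiset.count_add, ih, List.countP_cons]
    by_cases h : s ∈ U
    · rw [Multiset.count_eq_one_of_mem U.nodup h]
      simp [h, Nat.add_comm]
    · rw [Multiset.count_eq_zero_of_notMem (by simpa using h)]
      simp [h]

lemma mem_sum_map {L : List (Finset β)} {s : β} :
    s ∈ (L.map Finset.val).sum ↔ ∃ U ∈ L, s ∈ U := by
  induction L with
  | nil => simp
  | cons U L ih => simp [ih]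

lemma wordsSet_zero : WordsSet (0 : Multiset β) = {([] : List (Finset β))} := by
  ext L
  constructor
  · rintro ⟨h1, h2⟩
    cases L with
    | nil => rfl
    | cons U L =>
      exfalso
      simp only [List.map_cons, List.sum_cons] at h2
      have : U.val = 0 := by
        have hle : U.val ≤ (0 : Multiset β) := h2 ▸ self_le_add_right _ _
        exact Multiset.le_zero.1 hle
      exact absurd (Finset.val_eq_zero.1 this) (h1 U List.mem_cons_self).ne_empty
  · rintro rfl
    exact ⟨by simp, by simp⟩

lemma val_le_of_mem_powerset {M : Multiset β} {U : Finset β} (hU : U ⊆ M.toFinset) :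
    U.val ≤ M := by
  rw [Multiset.le_iff_count]
  intro a
  by_cases h : a ∈ U
  · rw [Multiset.count_eq_one_of_mem U.nodup h]
    exact Multiset.one_le_count_iff_mem.2 (Multiset.mem_toFinset.1 (hU h))
  · rw [Multiset.count_eq_zero_of_notMem (by simpa using h)]
    exact Nat.zero_le _

lemma wordsSet_decomp {M : Multiset β} (hM : M ≠ 0) :
    WordsSet M =
      ⋃ U ∈ (↑(M.toFinset.powerset.erase ∅) : Set (Finset β)),
        (fun L' => U :: L') '' WordsSet (M - U.val) := by
  ext L
  simp only [Set.mem_iUnion, Finset.mem_coe, Finset.mem_erase, Finset.mem_powerset,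
    Set.mem_image, exists_prop]
  constructor
  · rintro ⟨h1, h2⟩
    cases L with
    | nil => exact absurd h2.symm (by simpa using hM)
    | cons U L' =>
      simp only [List.map_cons, List.sum_cons] at h2
      have hUval : U.val ≤ M := h2 ▸ self_le_add_right _ _
      refine ⟨U, ⟨(h1 U List.mem_cons_self).ne_empty, ?_⟩, L', ⟨?_, ?_⟩, rfl⟩
      · intro a ha
        exact Multiset.mem_toFinset.2 (Multiset.mem_of_le hUval ha)
      · exact fun V hV => h1 V (List.mem_cons_of_mem U hV)
      · rw [← h2, add_tsub_cancel_left]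
  · rintro ⟨U, ⟨hUne, hUsub⟩, L', ⟨h1, h2⟩, rfl⟩
    refine ⟨?_, ?_⟩
    · intro V hV
      rcases List.mem_cons.1 hV with rfl | hV
      · exact Finset.nonempty_of_ne_empty hUne
      · exact h1 V hV
    · simp only [List.map_cons, List.sum_cons, h2]
      exact add_tsub_cancel_of_le (val_le_of_mem_powerset hUsub)

lemma wordsSet_aux (N : ℕ) : ∀ M : Multiset β, Multiset.card M ≤ N →
    (WordsSet M).Finite ∧
      ∑ᶠ L ∈ WordsSet M, ((-1 : ℤ) ^ L.length) = (-1) ^ Multiset.card M := by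
  induction N with
  | zero =>
    intro M hM
    have hM0 : M = 0 := by simpa [Multiset.card_eq_zero] using Nat.le_zero.1 hM
    subst hM0
    rw [wordsSet_zero]
    exact ⟨Set.finite_singleton _, by rw [finsum_mem_singleton]; simp⟩
  | succ N ih =>
    intro M hM
    by_cases hM0 : M = 0
    · subst hM0
      rw [wordsSet_zero]
      exact ⟨Set.finite_singleton _, by rw [finsum_mem_singleton]; simp⟩
    · have htoF : M.toFinset.Nonempty := Multiset.toFinset_nonempty.2 hM0
      -- key facts about the pieces
      have hpiece : ∀ U ∈ M.toFinset.powerset.erase ∅,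
          (WordsSet (M - U.val)).Finite ∧
          ∑ᶠ L ∈ WordsSet (M - U.val), ((-1 : ℤ) ^ L.length) =
            (-1) ^ Multiset.card (M - U.val) := by
        intro U hU
        simp only [Finset.mem_erase, Finset.mem_powerset] at hU
        have hle : U.val ≤ M := val_le_of_mem_powerset hU.2
        have hcard : Multiset.card (M - U.val) ≤ N := by
          have h1 : Multiset.card (M - U.val) = Multiset.card M - U.card :=
            Multiset.card_sub hle
          have h2 : 1 ≤ U.card := Finset.card_pos.2 (Finset.nonempty_of_ne_empty hU.1)
          omega
        exact ih _ hcard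
      set I := M.toFinset.powerset.erase ∅ with hI
      have hdisj : (↑I : Set (Finset β)).PairwiseDisjoint
          (fun U => (fun L' => U :: L') '' WordsSet (M - U.val)) := by
        intro U₁ h1 U₂ h2 hne
        rw [Function.onFun, Set.disjoint_left]
        rintro L ⟨L₁, _, rfl⟩ ⟨L₂, _, hL2⟩
        exact hne (by injection hL2 with h _; exact h.symm)
      have hfin : ∀ U ∈ (↑I : Set (Finset β)), ((fun L' => U :: L') '' WordsSet (M - U.val)).Finite :=
        fun U hU => ((hpiece U (Finset.mem_coe.1 hU)).1).image _
      have hdec := wordsSet_decomp (β := β) hM0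
      rw [← hI] at hdec
      constructor
      · rw [hdec]
        exact Set.Finite.biUnion I.finite_toSet hfin
      · rw [hdec, finsum_mem_biUnion hdisj I.finite_toSet hfin, finsum_mem_coe_finset]
        have hterm : ∀ U ∈ I,
            ∑ᶠ L ∈ (fun L' => U :: L') '' WordsSet (M - U.val), ((-1 : ℤ) ^ L.length)
              = -((-1) ^ Multiset.card M * (-1) ^ U.card) := by
          intro U hU
          have hinj : (WordsSet (M - U.val)).InjOn (fun L' => U :: L') := by
            intro a _ b _ h
            injection h
          rw [finsum_mem_image hinj]
          have hfin' := (hpiece U hU).1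
          rw [finsum_mem_eq_finite_toFinset_sum _ hfin']
          have hsum := (hpiece U hU).2
          rw [finsum_mem_eq_finite_toFinset_sum _ hfin'] at hsum
          have hstep : ∑ L' ∈ hfin'.toFinset, ((-1 : ℤ) ^ (U :: L').length)
              = -∑ L' ∈ hfin'.toFinset, ((-1 : ℤ) ^ L'.length) := by
            rw [← Finset.sum_neg_distrib]
            refine Finset.sum_congr rfl fun L' _ => ?_
            simp [pow_succ]
          rw [hstep, hsum]
          -- exponent arithmetic
          simp only [hI, Finset.mem_erase, Finset.mem_powerset] at hU
          have hle : U.val ≤ M := val_le_of_mem_powerset hU.2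
          have hcardle : U.card ≤ Multiset.card M := by
            have := Multiset.card_le_card hle
            simpa using this
          have hcs : Multiset.card (M - U.val) = Multiset.card M - U.card := by
            have := Multiset.card_sub hle
            simpa using this
          rw [hcs]
          congr 1
          have : ((-1 : ℤ) ^ (Multiset.card M - U.card)) * ((-1) ^ U.card) = (-1) ^ Multiset.card M := by
            rw [← pow_add, Nat.sub_add_cancel hcardle]
          calc ((-1 : ℤ) ^ (Multiset.card M - U.card))
              = ((-1 : ℤ) ^ (Multiset.card M - U.card)) * (((-1) ^ U.card) * ((-1) ^ U.card)) := by
                rw [← mul_pow]; norm_num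
            _ = (-1) ^ Multiset.card M * (-1) ^ U.card := by rw [← mul_assoc, this]
        rw [Finset.sum_congr rfl hterm]
        have hps : ∑ U ∈ I, ((-1 : ℤ) ^ U.card) = -1 := by
          have h1 : ∑ U ∈ M.toFinset.powerset, ((-1 : ℤ) ^ U.card) = 0 :=
            Finset.sum_powerset_neg_one_pow_card_of_nonempty htoF
          have h2 : (∅ : Finset β) ∈ M.toFinset.powerset := Finset.mem_powerset.2 (Finset.empty_subset _)
          have h3 := Finset.add_sum_erase _ (fun U => ((-1 : ℤ) ^ U.card)) h2
          rw [h1] at h3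
          simp only [Finset.card_empty, pow_zero] at h3
          rw [hI]
          linarith
        calc ∑ U ∈ I, -((-1 : ℤ) ^ Multiset.card M * (-1) ^ U.card)
            = -((-1 : ℤ) ^ Multiset.card M * ∑ U ∈ I, ((-1 : ℤ) ^ U.card)) := by
              rw [Finset.mul_sum, ← Finset.sum_neg_distrib]
          _ = (-1) ^ Multiset.card M := by rw [hps]; ring
end Words

section Univ

variable {ι : Type*} [Fintype ι] [DecidableEq ι] {F : Finset (Finset ι)}

lemma univ_mem_F (hred : IsReducedForest Finset.univ F) (htree : IsTreeF Finset.univ F)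
    (hht : 2 ≤ forestHeight Finset.univ F) : (Finset.univ : Finset ι) ∈ F := by
  rcases mem_forestVerts.1 htree with h | ⟨x, _, hx⟩
  · exact h
  · exfalso
    have hF : F = ∅ := by
      rw [Finset.eq_empty_iff_forall_notMem]
      intro s hs
      have h1 := (hred.1 s hs).1
      have h2 := (hred.1 s hs).2
      have : s.card ≤ ({x} : Finset ι).card := Finset.card_le_card (hx ▸ h1)
      simp only [Finset.card_singleton] at this
      omega
    rw [hF] at hht
    simp [forestHeight] at hht

lemma univ_card (hred : IsReducedForest Finset.univ F) (htree : IsTreeF Finset.univ F)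
    (hht : 2 ≤ forestHeight Finset.univ F) : 2 ≤ (Finset.univ : Finset ι).card :=
  (hred.1 _ (univ_mem_F hred htree hht)).2

lemma hredF' (hred : IsReducedForest Finset.univ F) :
    IsReducedForest Finset.univ (F.erase Finset.univ) :=
  ⟨fun s hs => hred.1 s (Finset.mem_of_mem_erase hs),
   fun s hs t ht => hred.2 s (Finset.mem_of_mem_erase hs) t (Finset.mem_of_mem_erase ht)⟩

lemma vertsF'_subset {v : Finset ι} (hv : v ∈ forestVerts Finset.univ (F.erase Finset.univ)) :
    v ∈ forestVerts Finset.univ F := by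
  rcases mem_forestVerts.1 hv with h | ⟨x, hx, rfl⟩
  · exact F_subset_forestVerts (Finset.mem_of_mem_erase h)
  · exact singleton_mem_forestVerts hx

lemma mem_vertsF' {v : Finset ι} (hv : v ∈ forestVerts Finset.univ F) (hne : v ≠ Finset.univ) :
    v ∈ forestVerts Finset.univ (F.erase Finset.univ) := by
  rcases mem_forestVerts.1 hv with h | ⟨x, hx, rfl⟩
  · exact mem_forestVerts.2 (Or.inl (Finset.mem_erase.2 ⟨hne, h⟩))
  · exact singleton_mem_forestVerts hx

lemma root_def {s : Finset ι} :
    s ∈ rootsF Finset.univ (F.erase Finset.univ) ↔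
      s ∈ forestVerts Finset.univ (F.erase Finset.univ) ∧
        ∀ u ∈ forestVerts Finset.univ (F.erase Finset.univ), ¬s ⊂ u := by
  simp [rootsF]

lemma exists_root {v : Finset ι} (hv : v ∈ forestVerts Finset.univ (F.erase Finset.univ)) :
    ∃ s, s ∈ rootsF Finset.univ (F.erase Finset.univ) ∧ v ⊆ s := by
  classical
  set V := forestVerts Finset.univ (F.erase Finset.univ) with hV
  set P := V.filter (fun t => v ⊆ t) with hP
  have hne : P.Nonempty := ⟨v, by simp [hP, hv]⟩
  obtain ⟨t, ht, hmax⟩ := P.exists_max_image (fun t => t.card) hne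
  simp only [hP, Finset.mem_filter] at ht
  refine ⟨t, root_def.2 ⟨ht.1, fun u hu hsub => ?_⟩, ht.2⟩
  have huP : u ∈ P := by
    simp only [hP, Finset.mem_filter]
    exact ⟨hu, ht.2.trans hsub.subset⟩
  exact absurd (hmax u huP) (Finset.card_lt_card hsub).not_ge

lemma root_unique (hred : IsReducedForest Finset.univ F) {s t v : Finset ι}
    (hs : s ∈ rootsF Finset.univ (F.erase Finset.univ))
    (ht : t ∈ rootsF Finset.univ (F.erase Finset.univ))
    (hv : v.Nonempty) (h1 : v ⊆ s) (h2 : v ⊆ t) : s = t := by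
  have hs' := root_def.1 hs
  have ht' := root_def.1 ht
  rcases verts_laminar (hredF' hred) hs'.1 ht'.1 with h | h | h
  · rcases eq_or_ne s t with rfl | hne
    · rfl
    · exact absurd (Finset.ssubset_iff_subset_ne.2 ⟨h, hne⟩) (hs'.2 t ht'.1)
  · rcases eq_or_ne t s with rfl | hne
    · rfl
    · exact absurd (Finset.ssubset_iff_subset_ne.2 ⟨h, hne⟩) (ht'.2 s hs'.1)
  · exact absurd (le_bot_iff.1 (h h1 h2)) hv.ne_empty

lemma root_ne_univ (hred : IsReducedForest Finset.univ F) (htree : IsTreeF Finset.univ F)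
    (hht : 2 ≤ forestHeight Finset.univ F) {s : Finset ι}
    (hs : s ∈ rootsF Finset.univ (F.erase Finset.univ)) : s ≠ Finset.univ := by
  have hs' := (root_def.1 hs).1
  rcases mem_forestVerts.1 hs' with h | ⟨x, _, rfl⟩
  · exact (Finset.mem_erase.1 h).1
  · intro he
    have := univ_card hred htree hht
    rw [← he] at this
    simp at this

lemma hred_sub (hred : IsReducedForest Finset.univ F) (s : Finset ι) :
    IsReducedForest s (F.filter fun t => t ⊆ s) :=
  ⟨fun t ht => ⟨(Finset.mem_filter.1 ht).2, (hred.1 t (Finset.mem_filter.1 ht).1).2⟩,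
   fun a ha b hb =>
     hred.2 a (Finset.filter_subset _ _ ha) b (Finset.filter_subset _ _ hb)⟩

lemma mem_vertsSub (hred : IsReducedForest Finset.univ F) {s v : Finset ι}
    (hv : v ∈ forestVerts Finset.univ F) (hsub : v ⊆ s) (hne : v ≠ Finset.univ) :
    v ∈ forestVerts s (F.filter fun t => t ⊆ s) := by
  rcases mem_forestVerts.1 hv with h | ⟨x, _, rfl⟩
  · exact F_subset_forestVerts (Finset.mem_filter.2 ⟨h, hsub⟩)
  · exact singleton_mem_forestVerts (by simpa using hsub)

lemma vertsSub_sub {s v : Finset ι} (hv : v ∈ forestVerts s (F.filter fun t => t ⊆ s)) :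
    v ∈ forestVerts Finset.univ F ∧ v ⊆ s := by
  rcases mem_forestVerts.1 hv with h | ⟨x, hx, rfl⟩
  · exact ⟨F_subset_forestVerts (Finset.mem_filter.1 h).1, (Finset.mem_filter.1 h).2⟩
  · exact ⟨singleton_mem_forestVerts (Finset.mem_univ x), by simpa using hx⟩

lemma child_sub (hred : IsReducedForest Finset.univ F) {s t u : Finset ι}
    (hch : IsChildV Finset.univ F t u) (hu : u ⊆ s) (hune : u ≠ Finset.univ)
    (hsne : s ≠ Finset.univ) : IsChildV s (F.filter fun v => v ⊆ s) t u := by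
  obtain ⟨htv, huv, htu, hbet⟩ := hch
  have hts : t ⊆ s := htu.subset.trans hu
  have htne : t ≠ Finset.univ := by
    rintro rfl
    exact hune (Finset.eq_univ_iff_forall.2 fun y => htu.subset (Finset.mem_univ y))
  exact ⟨mem_vertsSub hred htv hts htne, mem_vertsSub hred huv hu hune, htu,
    fun w hw hcon => hbet w (vertsSub_sub hw).1 hcon⟩

noncomputable def rootOf (F : Finset (Finset ι)) (v : Finset ι) : Finset ι :=
  if h : ∃ s, s ∈ rootsF Finset.univ (F.erase Finset.univ) ∧ v ⊆ s then h.choose else ∅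

lemma rootOf_mem {v : Finset ι} (hv : v ∈ forestVerts Finset.univ F) (hne : v ≠ Finset.univ) :
    rootOf F v ∈ rootsF Finset.univ (F.erase Finset.univ) ∧ v ⊆ rootOf F v := by
  have h : ∃ s, s ∈ rootsF Finset.univ (F.erase Finset.univ) ∧ v ⊆ s :=
    exists_root (mem_vertsF' hv hne)
  rw [rootOf, dif_pos h]
  exact h.choose_spec

lemma rootOf_eq (hred : IsReducedForest Finset.univ F) {v : Finset ι}
    (hv : v ∈ forestVerts Finset.univ F) (hne : v ≠ Finset.univ) {s : Finset ι}
    (hs : s ∈ rootsF Finset.univ (F.erase Finset.univ)) (hsub : v ⊆ s) : rootOf F v = s :=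
  root_unique hred (rootOf_mem hv hne).1 hs (vert_nonempty hred hv)
    (rootOf_mem hv hne).2 hsub

end Univ

section SubUsed

variable {β : Type*} [DecidableEq β]

/-- The set of colours used by the letter `s` in the word `L`, together with `0`. -/
def subUsed (L : List (Finset β)) (s : β) : Finset ℕ :=
  insert 0 (((Finset.range L.length).filter fun j => s ∈ L.getD j ∅).image (· + 1))

lemma mem_subUsed {L : List (Finset β)} {s : β} {m : ℕ} :
    m ∈ subUsed L s ↔ m = 0 ∨ ∃ j, j < L.length ∧ s ∈ L.getD j ∅ ∧ m = j + 1 := by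
  simp only [subUsed, Finset.mem_insert, Finset.mem_image, Finset.mem_filter, Finset.mem_range]
  constructor
  · rintro (h | ⟨j, ⟨h1, h2⟩, h3⟩)
    · exact Or.inl h
    · exact Or.inr ⟨j, h1, h2, h3.symm⟩
  · rintro (h | ⟨j, h1, h2, h3⟩)
    · exact Or.inl h
    · exact Or.inr ⟨j, ⟨h1, h2⟩, h3.symm⟩

lemma zero_mem_subUsed {L : List (Finset β)} {s : β} : 0 ∈ subUsed L s :=
  Finset.mem_insert_self _ _

lemma subUsed_le {L : List (Finset β)} {s : β} {m : ℕ} (hm : m ∈ subUsed L s) :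
    m ≤ L.length := by
  rcases mem_subUsed.1 hm with rfl | ⟨j, h1, _, rfl⟩
  · exact Nat.zero_le _
  · omega

lemma countP_eq_card_filter_range (L : List (Finset β)) (s : β) :
    ((Finset.range L.length).filter fun j => s ∈ L.getD j ∅).card
      = L.countP (fun U => decide (s ∈ U)) := by
  induction L with
  | nil => simp
  | cons U L ih =>
    rw [Finset.card_filter] at ih ⊢
    simp only [List.length_cons]
    rw [Finset.sum_range_succ']
    simp only [List.getD_cons_succ, List.getD_cons_zero, List.countP_cons, ih]
    by_cases h : s ∈ U <;> simp [h]

lemma card_subUsed (L : List (Finset β)) (s : β) :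
    (subUsed L s).card = L.countP (fun U => decide (s ∈ U)) + 1 := by
  rw [subUsed, Finset.card_insert_of_notMem (by simp),
    Finset.card_image_of_injective _ (fun a b h => by omega), countP_eq_card_filter_range]

end SubUsed

section SortedNat

/-- Sorted list of a finite set of naturals. -/
noncomputable def sl (U : Finset ℕ) : List ℕ := U.sort (· ≤ ·)

lemma sl_length (U : Finset ℕ) : (sl U).length = U.card := Finset.length_sort _

lemma sl_getD_mem {U : Finset ℕ} {i : ℕ} (h : i < U.card) : (sl U).getD i 0 ∈ U := by
  rw [sl, List.getD_eq_getElem _ _ (by rw [Finset.length_sort]; exact h)]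
  exact (Finset.mem_sort _).1 (List.getElem_mem _)

lemma sl_getD_zero {U : Finset ℕ} (h0 : 0 ∈ U) : (sl U).getD 0 0 = 0 := by
  have hmem : 0 ∈ sl U := (Finset.mem_sort _).2 h0
  have hlen : 0 < (sl U).length := List.length_pos_iff.2 (List.ne_nil_of_mem hmem)
  have hidx : (sl U).idxOf 0 < (sl U).length := List.idxOf_lt_length_iff.2 hmem
  rw [List.getD_eq_getElem _ _ hlen]
  refine le_antisymm ?_ (Nat.zero_le _)
  have hs : (sl U).Pairwise (· ≤ ·) := Finset.pairwise_sort _ _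
  have := hs.rel_get_of_le (a := ⟨0, hlen⟩) (b := ⟨(sl U).idxOf 0, hidx⟩)
    (Fin.mk_le_mk.2 (Nat.zero_le _))
  rwa [List.idxOf_get hidx] at this

lemma sl_getD_lt {U : Finset ℕ} {i j : ℕ} (hij : i < j) (hj : j < U.card) :
    (sl U).getD i 0 < (sl U).getD j 0 := by
  have hj' : j < (sl U).length := by rw [sl_length]; exact hj
  have hi' : i < (sl U).length := lt_trans hij hj'
  rw [List.getD_eq_getElem _ _ hi', List.getD_eq_getElem _ _ hj']
  exact (Finset.sortedLT_sort U).strictMono_get (Fin.mk_lt_mk.2 hij)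

lemma sl_getD_le {U : Finset ℕ} {i j : ℕ} (hij : i ≤ j) (hj : j < U.card) :
    (sl U).getD i 0 ≤ (sl U).getD j 0 := by
  rcases eq_or_lt_of_le hij with rfl | h
  · exact le_rfl
  · exact (sl_getD_lt h hj).le

lemma sl_indexOf_lt {U : Finset ℕ} {x : ℕ} (hx : x ∈ U) : (sl U).idxOf x < U.card := by
  rw [← sl_length]
  exact List.idxOf_lt_length_iff.2 ((Finset.mem_sort _).2 hx)

lemma sl_getD_indexOf {U : Finset ℕ} {x : ℕ} (hx : x ∈ U) :
    (sl U).getD ((sl U).idxOf x) 0 = x := by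
  have h : (sl U).idxOf x < (sl U).length :=
    List.idxOf_lt_length_iff.2 ((Finset.mem_sort _).2 hx)
  rw [List.getD_eq_getElem _ _ h]
  exact List.idxOf_get h

lemma sl_indexOf_getD {U : Finset ℕ} {i : ℕ} (h : i < U.card) :
    (sl U).idxOf ((sl U).getD i 0) = i := by
  have h' : i < (sl U).length := by rw [sl_length]; exact h
  rw [List.getD_eq_getElem _ _ h']
  exact (Finset.sort_nodup _ _).idxOf_getElem _ _

end SortedNat

section Main

variable {ι : Type*} [Fintype ι] [DecidableEq ι] {n : ℕ}

/-- The inverse construction: the colouring of the tree determined by a word `L`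
and the family of subtree colourings `g`. -/
noncomputable def invC (F : Finset (Finset ι)) (g : Finset ι → (Finset ι → ℕ) × ℕ)
    (L : List (Finset (Finset ι))) : Finset ι → ℕ := fun v =>
  if v = Finset.univ then L.length + 1
  else if v ∈ forestVerts Finset.univ F then
    (sl (subUsed L (rootOf F v))).getD ((g (rootOf F v)).1 v) 0
  else 0

/-- The forward map: the word of colour classes of a colouring. -/
def PhiW (F : Finset (Finset ι)) (p : (Finset ι → ℕ) × ℕ) : List (Finset (Finset ι)) :=
  (List.range (p.2 - 1)).map fun j =>
    (rootsF Finset.univ (F.erase Finset.univ)).filter fun s =>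
      ∃ v ∈ forestVerts s (F.filter fun t => t ⊆ s), p.1 v = j + 1

/-- The content multiset. -/
noncomputable def MM (F : Finset (Finset ι)) (g : Finset ι → (Finset ι → ℕ) × ℕ) :
    Multiset (Finset ι) :=
  ∑ s ∈ rootsF Finset.univ (F.erase Finset.univ), (g s).2 • ({s} : Multiset (Finset ι))

lemma card_finset_sum {γ α : Type*} (t : Finset γ) (f : γ → Multiset α) :
    Multiset.card (∑ i ∈ t, f i) = ∑ i ∈ t, Multiset.card (f i) := by
  classical
  induction t using Finset.cons_induction with
  | empty => simp
  | cons a t ha ih => simp [Finset.sum_cons, ih]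

lemma count_MM {F : Finset (Finset ι)} {g : Finset ι → (Finset ι → ℕ) × ℕ} (t : Finset ι) :
    Multiset.count t (MM F g)
      = if t ∈ rootsF Finset.univ (F.erase Finset.univ) then (g t).2 else 0 := by
  rw [MM, Multiset.count_sum']
  simp only [Multiset.count_nsmul, Multiset.count_singleton, mul_ite, mul_one, mul_zero]
  exact Finset.sum_ite_eq _ t _

lemma card_MM {F : Finset (Finset ι)} {g : Finset ι → (Finset ι → ℕ) × ℕ} :
    Multiset.card (MM F g) = ∑ s ∈ rootsF Finset.univ (F.erase Finset.univ), (g s).2 := by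
  rw [MM, card_finset_sum]
  simp [Multiset.card_nsmul]

variable {F : Finset (Finset ι)} {g : Finset ι → (Finset ι → ℕ) × ℕ} {part : ι → Fin n}

section WithHyps

variable (hred : IsReducedForest Finset.univ F) (htree : IsTreeF Finset.univ F)
  (hmix : IsMixingForest Finset.univ F part) (hht : 2 ≤ forestHeight Finset.univ F)
  (hg : ∀ s ∈ rootsF Finset.univ (F.erase Finset.univ),
      IsGapFreeColouring s (F.filter fun t => t ⊆ s) (g s).1 (g s).2)

include hred htree hht

lemma sub_vert_facts {s v : Finset ι} (hs : s ∈ rootsF Finset.univ (F.erase Finset.univ))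
    (hv : v ∈ forestVerts s (F.filter fun t => t ⊆ s)) :
    v ∈ forestVerts Finset.univ F ∧ v ⊆ s ∧ v ≠ Finset.univ ∧ rootOf F v = s := by
  obtain ⟨h1, h2⟩ := vertsSub_sub hv
  have hne : v ≠ Finset.univ := by
    rintro rfl
    exact root_ne_univ hred htree hht hs (Finset.eq_univ_iff_forall.2 fun y => h2 (Finset.mem_univ y))
  exact ⟨h1, h2, hne, rootOf_eq hred h1 hne hs h2⟩

lemma invC_eq_on {L : List (Finset (Finset ι))} {s v : Finset ι}
    (hs : s ∈ rootsF Finset.univ (F.erase Finset.univ))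
    (hv : v ∈ forestVerts s (F.filter fun t => t ⊆ s)) :
    invC F g L v = (sl (subUsed L s)).getD ((g s).1 v) 0 := by
  obtain ⟨h1, _, hne, hroot⟩ := sub_vert_facts hred htree hht hs hv
  rw [invC, if_neg hne, if_pos h1, hroot]

include hg

lemma exists_r_pos : ∃ s ∈ rootsF Finset.univ (F.erase Finset.univ), 1 ≤ (g s).2 := by
  have h2 : 2 ≤ forestHeight Finset.univ F := hht
  rw [forestHeight, Finset.le_sup_iff (by norm_num)] at h2
  obtain ⟨x, -, hx⟩ := h2
  have h1 : 1 < (F.filter fun s => x ∈ s).card := hx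
  obtain ⟨v, hv, w, hw, hvw⟩ := Finset.one_lt_card.1 h1
  simp only [Finset.mem_filter] at hv hw
  -- pick a member of F distinct from univ containing x
  obtain ⟨u, hu, hune, hxu⟩ : ∃ u, u ∈ F ∧ u ≠ Finset.univ ∧ x ∈ u := by
    rcases eq_or_ne v Finset.univ with rfl | hne
    · exact ⟨w, hw.1, fun h => hvw h.symm, hw.2⟩
    · exact ⟨v, hv.1, hne, hv.2⟩
  obtain ⟨s, hs, hus⟩ := exists_root (mem_vertsF' (F_subset_forestVerts hu) hune)
  refine ⟨s, hs, ?_⟩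
  have husub : u ∈ forestVerts s (F.filter fun t => t ⊆ s) :=
    mem_vertsSub hred (F_subset_forestVerts hu) hus hune
  have hpos : 1 ≤ (g s).1 u :=
    col_internal_pos (hred_sub hred s) (hg s hs) (Finset.mem_filter.2 ⟨hu, hus⟩)
  have hle : (g s).1 u ≤ (g s).2 := (hg s hs).1 u husub
  omega

lemma words_ne_nil {L : List (Finset (Finset ι))} (hL : L ∈ WordsSet (MM F g)) : L ≠ [] := by
  obtain ⟨s, hs, hr⟩ := exists_r_pos hred htree hht hg
  intro h
  subst h
  have := hL.2
  simp only [List.map_nil, List.sum_nil] at this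
  have hc := count_MM (F := F) (g := g) s
  rw [← this, if_pos hs] at hc
  simp at hc
  omega

lemma words_countP {L : List (Finset (Finset ι))} (hL : L ∈ WordsSet (MM F g))
    {s : Finset ι} (hs : s ∈ rootsF Finset.univ (F.erase Finset.univ)) :
    L.countP (fun U => decide (s ∈ U)) = (g s).2 := by
  have := count_sum_map L s
  rw [hL.2] at this
  rw [← this, count_MM, if_pos hs]

lemma words_card_subUsed {L : List (Finset (Finset ι))} (hL : L ∈ WordsSet (MM F g))
    {s : Finset ι} (hs : s ∈ rootsF Finset.univ (F.erase Finset.univ)) :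
    (subUsed L s).card = (g s).2 + 1 := by
  rw [card_subUsed, words_countP hred htree hht hg hL hs]

lemma words_letter_roots {L : List (Finset (Finset ι))} (hL : L ∈ WordsSet (MM F g))
    {U : Finset (Finset ι)} (hU : U ∈ L) {s : Finset ι} (hsU : s ∈ U) :
    s ∈ rootsF Finset.univ (F.erase Finset.univ) := by
  have h1 : s ∈ (L.map Finset.val).sum := mem_sum_map.2 ⟨U, hU, hsU⟩
  rw [hL.2] at h1
  by_contra hns
  have := count_MM (F := F) (g := g) s
  rw [if_neg hns] at this
  exact absurd this (by simpa [Multiset.count_eq_zero] using h1)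

omit hred htree hht hg in
lemma invC_univ (L : List (Finset (Finset ι))) :
    invC F g L Finset.univ = L.length + 1 := by
  unfold invC
  simp

omit hred htree hht hg in
lemma invC_nonvert {L : List (Finset (Finset ι))} {v : Finset ι}
    (hne : v ≠ Finset.univ) (hv : v ∉ forestVerts Finset.univ F) : invC F g L v = 0 := by
  unfold invC
  rw [if_neg hne, if_neg hv]

lemma vert_decomp {v : Finset ι} (hv : v ∈ forestVerts Finset.univ F)
    (hne : v ≠ Finset.univ) :
    ∃ s, s ∈ rootsF Finset.univ (F.erase Finset.univ) ∧
      v ∈ forestVerts s (F.filter fun t => t ⊆ s) ∧ rootOf F v = s :=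
  ⟨rootOf F v, (rootOf_mem hv hne).1,
    mem_vertsSub hred hv (rootOf_mem hv hne).2 hne, rfl⟩

lemma invC_val_mem {L : List (Finset (Finset ι))} (hL : L ∈ WordsSet (MM F g))
    {s v : Finset ι} (hs : s ∈ rootsF Finset.univ (F.erase Finset.univ))
    (hv : v ∈ forestVerts s (F.filter fun t => t ⊆ s)) :
    invC F g L v ∈ subUsed L s ∧ (g s).1 v < (subUsed L s).card := by
  have hcard := words_card_subUsed hred htree hht hg hL hs
  have hidx : (g s).1 v < (subUsed L s).card := by
    have := (hg s hs).1 v hv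
    omega
  rw [invC_eq_on hred htree hht hs hv]
  exact ⟨sl_getD_mem hidx, hidx⟩

lemma invC_leaf {L : List (Finset (Finset ι))} (x : ι) :
    invC F g L {x} = 0 := by
  have hne : ({x} : Finset ι) ≠ Finset.univ := by
    intro h
    have := univ_card hred htree hht
    rw [← h] at this
    simp at this
  have hv : ({x} : Finset ι) ∈ forestVerts Finset.univ F :=
    singleton_mem_forestVerts (Finset.mem_univ x)
  obtain ⟨s, hs, hvs, -⟩ := vert_decomp hred htree hht hg hv hne
  rw [invC_eq_on hred htree hht hs hvs]
  have hx : x ∈ s := (vertsSub_sub hvs).2 (Finset.mem_singleton_self x)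
  rw [(hg s hs).2.2.1 x hx]
  exact sl_getD_zero zero_mem_subUsed

lemma invC_gapfree {L : List (Finset (Finset ι))} (hL : L ∈ WordsSet (MM F g)) :
    IsGapFreeColouring Finset.univ F (invC F g L) (L.length + 1) := by
  have hroots_ne := fun {s} (hs : s ∈ rootsF Finset.univ (F.erase Finset.univ)) =>
    root_ne_univ hred htree hht hs
  refine ⟨?_, ?_, ?_, ?_, ?_⟩
  · -- bound
    intro v hv
    rcases eq_or_ne v Finset.univ with rfl | hne
    · rw [invC_univ]
    · obtain ⟨s, hs, hvs, -⟩ := vert_decomp hred htree hht hg hv hne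
      have h := (invC_val_mem hred htree hht hg hL hs hvs).1
      have := subUsed_le h
      omega
  · -- all colours used
    intro j hj
    rcases Nat.eq_or_lt_of_le hj with hj1 | hj2
    · exact ⟨Finset.univ, htree, by rw [invC_univ, hj1]⟩
    · have hjlen : j ≤ L.length := by omega
      rcases Nat.eq_zero_or_pos j with rfl | hjpos
      · have hucard := univ_card hred htree hht
        have hpos : 0 < (Finset.univ : Finset ι).card := by omega
        obtain ⟨x, -⟩ := Finset.card_pos.1 hpos
        exact ⟨{x}, singleton_mem_forestVerts (Finset.mem_univ x),
          invC_leaf hred htree hht hg x⟩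
      · -- 1 ≤ j ≤ len
        have hjm : j - 1 < L.length := by omega
        set U := L.getD (j - 1) ∅ with hU
        have hUL : U ∈ L := by
          rw [hU, List.getD_eq_getElem _ _ hjm]
          exact List.getElem_mem _
        obtain ⟨t, ht⟩ := hL.1 U hUL
        have hts : t ∈ rootsF Finset.univ (F.erase Finset.univ) :=
          words_letter_roots hred htree hht hg hL hUL ht
        have hjsub : j ∈ subUsed L t := mem_subUsed.2 (Or.inr ⟨j - 1, hjm, by rw [← hU]; exact ht, by omega⟩)
        have hidx : (sl (subUsed L t)).idxOf j < (subUsed L t).card := sl_indexOf_lt hjsub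
        have hcard := words_card_subUsed hred htree hht hg hL hts
        obtain ⟨v, hv, hvj⟩ := (hg t hts).2.1 ((sl (subUsed L t)).idxOf j) (by omega)
        refine ⟨v, (vertsSub_sub hv).1, ?_⟩
        rw [invC_eq_on hred htree hht hts hv, hvj, sl_getD_indexOf hjsub]
  · -- leaves
    intro x _
    exact invC_leaf hred htree hht hg x
  · -- children
    intro t u hch
    rcases eq_or_ne u Finset.univ with rfl | hune
    · have htne : t ≠ Finset.univ := fun h => by
        have := hch.2.2.1
        rw [h] at this
        exact (lt_irrefl _ this).elim
      rw [invC_univ]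
      obtain ⟨s, hs, hts, -⟩ := vert_decomp hred htree hht hg hch.1 htne
      have h := (invC_val_mem hred htree hht hg hL hs hts).1
      have := subUsed_le h
      omega
    · obtain ⟨s, hs, hus, -⟩ := vert_decomp hred htree hht hg hch.2.1 hune
      have husub : u ⊆ s := (vertsSub_sub hus).2
      have hch' : IsChildV s (F.filter fun w => w ⊆ s) t u :=
        child_sub hred hch husub hune (hroots_ne hs)
      have hlt : (g s).1 t < (g s).1 u := (hg s hs).2.2.2.1 t u hch'
      have hu' := (invC_val_mem hred htree hht hg hL hs hch'.2.1).2
      rw [invC_eq_on hred htree hht hs hch'.1, invC_eq_on hred htree hht hs hch'.2.1]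
      exact sl_getD_lt hlt hu'
  · -- non-vertices
    intro v hv
    have hne : v ≠ Finset.univ := fun h => hv (h ▸ htree)
    exact invC_nonvert hne hv

lemma invC_image {L : List (Finset (Finset ι))} (hL : L ∈ WordsSet (MM F g))
    {s : Finset ι} (hs : s ∈ rootsF Finset.univ (F.erase Finset.univ)) :
    (forestVerts s (F.filter fun t => t ⊆ s)).image (invC F g L) = subUsed L s := by
  apply Finset.Subset.antisymm
  · intro m hm
    obtain ⟨v, hv, rfl⟩ := Finset.mem_image.1 hm
    exact (invC_val_mem hred htree hht hg hL hs hv).1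
  · intro m hm
    have hidx : (sl (subUsed L s)).idxOf m < (subUsed L s).card := sl_indexOf_lt hm
    have hcard := words_card_subUsed hred htree hht hg hL hs
    obtain ⟨v, hv, hvj⟩ := (hg s hs).2.1 ((sl (subUsed L s)).idxOf m) (by omega)
    refine Finset.mem_image.2 ⟨v, hv, ?_⟩
    rw [invC_eq_on hred htree hht hs hv, hvj, sl_getD_indexOf hm]

lemma invC_proj {L : List (Finset (Finset ι))} (hL : L ∈ WordsSet (MM F g))
    {s : Finset ι} (hs : s ∈ rootsF Finset.univ (F.erase Finset.univ)) :
    projColouring s (F.filter fun t => t ⊆ s) (invC F g L) = g s := by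
  have himg := invC_image hred htree hht hg hL hs
  have hcard := words_card_subUsed hred htree hht hg hL hs
  rw [projColouring]
  have h2 : ((forestVerts s (F.filter fun t => t ⊆ s)).image (invC F g L)).card - 1
      = (g s).2 := by rw [himg]; omega
  refine Prod.ext ?_ h2
  funext v
  simp only
  by_cases hv : v ∈ forestVerts s (F.filter fun t => t ⊆ s)
  · rw [if_pos hv]
    have heq := invC_eq_on (g := g) (L := L) hred htree hht hs hv
    have hidx := (invC_val_mem hred htree hht hg hL hs hv).2
    show ((((forestVerts s (F.filter fun t => t ⊆ s)).image (invC F g L)).sort (· ≤ ·)).idxOf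
      (invC F g L v)) = (g s).1 v
    rw [himg, heq]
    exact sl_indexOf_getD hidx
  · rw [if_neg hv]
    exact ((hg s hs).2.2.2.2 v hv).symm

lemma weak_mixing_auto {c : Finset ι → ℕ} {r : ℕ}
    (hmix2 : IsMixingForest Finset.univ F part)
    (hc : IsGapFreeColouring Finset.univ F c r) : IsWeaklyMixing Finset.univ F part c := by
  by_cases h1 : ∀ s ∈ forestVerts Finset.univ F, c s ≠ 1
  · exact Or.inl h1
  · push_neg at h1
    obtain ⟨v, hv, hv1⟩ := h1
    have hvF : v ∈ F := by
      rcases mem_forestVerts.1 hv with h | ⟨x, hx, rfl⟩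
      · exact h
      · rw [hc.2.2.1 x hx] at hv1
        exact absurd hv1 (by norm_num)
    have hnot : ∀ t ∈ F, ¬t ⊂ v := by
      intro t ht hsub
      have h1 := col_internal_pos hred hc ht
      have h2 := col_lt hc.2.2.2.1 v (F_subset_forestVerts hvF) t (F_subset_forestVerts ht) hsub
      omega
    obtain ⟨x, hx, y, hy, hxy⟩ := hmix2 v hvF hnot
    have hchild : ∀ z ∈ v, IsChildV Finset.univ F {z} v := by
      intro z hz
      have hzsub : ({z} : Finset ι) ⊂ v := by
        refine Finset.ssubset_iff_subset_ne.2 ⟨by simpa using hz, ?_⟩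
        intro h
        have := (hred.1 v hvF).2
        rw [← h] at this
        simp at this
      refine ⟨singleton_mem_forestVerts (Finset.mem_univ z), F_subset_forestVerts hvF,
        hzsub, ?_⟩
      intro w hw ⟨hw1, hw2⟩
      have hwF : w ∈ F := by
        rcases mem_forestVerts.1 hw with h | ⟨a, _, rfl⟩
        · exact h
        · have h1 : ({z} : Finset ι).card < ({a} : Finset ι).card := Finset.card_lt_card hw1
          simp at h1
      exact hnot w hwF hw2
    exact Or.inr ⟨v, F_subset_forestVerts hvF, hv1, x, y, hchild x hx, hchild y hy, hxy⟩

omit hred htree hht hg in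
lemma PhiW_length {p : (Finset ι → ℕ) × ℕ} : (PhiW F p).length = p.2 - 1 := by
  simp [PhiW]

omit hred htree hht hg in
lemma PhiW_getD {p : (Finset ι → ℕ) × ℕ} {j : ℕ} (hj : j < p.2 - 1) :
    (PhiW F p).getD j ∅ = (rootsF Finset.univ (F.erase Finset.univ)).filter
      (fun s => ∃ v ∈ forestVerts s (F.filter fun t => t ⊆ s), p.1 v = j + 1) := by
  have hlen : j < (PhiW F p).length := by rw [PhiW_length]; exact hj
  rw [List.getD_eq_getElem _ _ hlen]
  simp [PhiW]

section WithColouring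

variable {c : Finset ι → ℕ} {r : ℕ} (hc : IsGapFreeColouring Finset.univ F c r)
  (hproj : ∀ s ∈ rootsF Finset.univ (F.erase Finset.univ),
    projColouring s (F.filter fun t => t ⊆ s) c = g s)

include hc

omit hg in
lemma col_r_pos : 1 ≤ r := by
  have hucard := univ_card hred htree hht
  obtain ⟨x, -⟩ := Finset.card_pos.1 (by omega : 0 < (Finset.univ : Finset ι).card)
  have hne : ({x} : Finset ι) ≠ Finset.univ := by
    intro h
    rw [← h] at hucard
    simp at hucard
  have h1 := col_lt_root hred htree hc (singleton_mem_forestVerts (Finset.mem_univ x)) hne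
  omega

omit hg in
lemma proj_val {s v : Finset ι} (hs : s ∈ rootsF Finset.univ (F.erase Finset.univ))
    (hv : v ∈ forestVerts s (F.filter fun t => t ⊆ s))
    (hp : projColouring s (F.filter fun t => t ⊆ s) c = g s) :
    (g s).1 v = (sl ((forestVerts s (F.filter fun t => t ⊆ s)).image c)).idxOf (c v) := by
  have h1 := congrFun (congrArg Prod.fst hp) v
  simp only [projColouring] at h1
  rw [if_pos hv] at h1
  exact h1.symm

omit hg in
lemma image_eq_subUsed {s : Finset ι} (hs : s ∈ rootsF Finset.univ (F.erase Finset.univ)) :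
    (forestVerts s (F.filter fun t => t ⊆ s)).image c = subUsed (PhiW F (c, r)) s := by
  have hrpos := col_r_pos hred htree hht hc
  ext m
  simp only [Finset.mem_image]
  rw [mem_subUsed]
  constructor
  · rintro ⟨v, hv, rfl⟩
    rcases Nat.eq_zero_or_pos (c v) with h0 | hpos
    · exact Or.inl h0
    · obtain ⟨hv1, hv2, hv3, -⟩ := sub_vert_facts hred htree hht hs hv
      have hlt : c v < r := col_lt_root hred htree hc hv1 hv3
      refine Or.inr ⟨c v - 1, by rw [PhiW_length]; omega, ?_, by omega⟩
      rw [PhiW_getD (by omega : c v - 1 < (c, r).2 - 1)]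
      exact Finset.mem_filter.2 ⟨hs, v, hv, by show c v = c v - 1 + 1; omega⟩
  · rintro (rfl | ⟨j, hjlen, hjmem, rfl⟩)
    · obtain ⟨x, hx⟩ := vert_nonempty (hredF' hred) (root_def.1 hs).1
      refine ⟨{x}, singleton_mem_forestVerts hx, hc.2.2.1 x (Finset.mem_univ x)⟩
    · rw [PhiW_length] at hjlen
      rw [PhiW_getD (by omega : j < (c, r).2 - 1)] at hjmem
      obtain ⟨-, v, hv, hcv⟩ := Finset.mem_filter.1 hjmem
      exact ⟨v, hv, hcv⟩

include hg hproj

lemma PhiW_mem_words : PhiW F (c, r) ∈ WordsSet (MM F g) := by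
  have hrpos := col_r_pos hred htree hht hc
  constructor
  · -- letters nonempty
    intro U hU
    obtain ⟨j, hj, rfl⟩ := List.mem_iff_getElem.1 hU
    have hj' : j < r - 1 := by rw [PhiW_length] at hj; exact hj
    rw [← List.getD_eq_getElem _ ∅ hj, PhiW_getD (by exact hj' : j < (c, r).2 - 1)]
    obtain ⟨w, hw, hwj⟩ := hc.2.1 (j + 1) (by omega)
    have hwne : w ≠ Finset.univ := by
      intro h
      rw [h, col_root hred htree hc] at hwj
      omega
    obtain ⟨s, hs, hws, -⟩ := vert_decomp hred htree hht hg hw hwne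
    exact ⟨s, Finset.mem_filter.2 ⟨hs, w, hws, hwj⟩⟩
  · -- content
    ext t
    rw [count_sum_map, count_MM]
    by_cases ht : t ∈ rootsF Finset.univ (F.erase Finset.univ)
    · rw [if_pos ht]
      have h1 := card_subUsed (PhiW F (c, r)) t
      rw [← image_eq_subUsed hred htree hht hc ht] at h1
      have h2 := congrArg Prod.snd (hproj t ht)
      simp only [projColouring] at h2
      have h3 : 0 < ((forestVerts t (F.filter fun u => u ⊆ t)).image c).card := by
        refine Finset.card_pos.2 (Finset.Nonempty.image ?_ _)
        obtain ⟨x, hx⟩ := vert_nonempty (hredF' hred) (root_def.1 ht).1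
        exact ⟨{x}, singleton_mem_forestVerts hx⟩
      omega
    · rw [if_neg ht]
      rw [List.countP_eq_zero]
      intro U hU
      obtain ⟨j, hj, rfl⟩ := List.mem_iff_getElem.1 hU
      have hj' : j < r - 1 := by rw [PhiW_length] at hj; exact hj
      rw [← List.getD_eq_getElem _ ∅ hj, PhiW_getD (by exact hj' : j < (c, r).2 - 1)]
      simp only [decide_eq_true_eq, Finset.mem_filter]
      rintro ⟨h, -⟩
      exact ht h

lemma left_inv_col : invC F g (PhiW F (c, r)) = c := by
  have hrpos := col_r_pos hred htree hht hc
  funext v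
  by_cases hv : v ∈ forestVerts Finset.univ F
  · rcases eq_or_ne v Finset.univ with rfl | hne
    · rw [invC_univ, PhiW_length, col_root hred htree hc]
      omega
    · obtain ⟨s, hs, hvs, -⟩ := vert_decomp hred htree hht hg hv hne
      rw [invC_eq_on (g := g) (L := PhiW F (c, r)) hred htree hht hs hvs]
      rw [proj_val hred htree hht hc hs hvs (hproj s hs)]
      rw [← image_eq_subUsed hred htree hht hc hs]
      have hcv : c v ∈ (forestVerts s (F.filter fun t => t ⊆ s)).image c :=
        Finset.mem_image_of_mem c hvs
      exact sl_getD_indexOf hcv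
  · have hne : v ≠ Finset.univ := fun h => hv (h ▸ htree)
    rw [invC_nonvert hne hv, hc.2.2.2.2 v hv]

omit hproj hc in
lemma right_inv_word {L : List (Finset (Finset ι))} (hL : L ∈ WordsSet (MM F g)) :
    PhiW F (invC F g L, L.length + 1) = L := by
  apply List.ext_getElem
  · rw [PhiW_length]
    simp
  · intro j hj1 hj2
    have hj : j < L.length := hj2
    rw [← List.getD_eq_getElem _ ∅ hj1, ← List.getD_eq_getElem _ ∅ hj2,
      PhiW_getD (by simpa using hj : j < (invC F g L, L.length + 1).2 - 1)]
    ext t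
    simp only [Finset.mem_filter]
    constructor
    · rintro ⟨ht, v, hv, hcv⟩
      have hmem := (invC_val_mem hred htree hht hg hL ht hv).1
      rw [hcv] at hmem
      rcases mem_subUsed.1 hmem with h | ⟨j', hj'1, hj'2, hj'3⟩
      · omega
      · have : j' = j := by omega
        subst this
        exact hj'2
    · intro ht
      have hUL : L.getD j ∅ ∈ L := by
        rw [List.getD_eq_getElem _ _ hj]
        exact List.getElem_mem _
      have hts : t ∈ rootsF Finset.univ (F.erase Finset.univ) :=
        words_letter_roots hred htree hht hg hL hUL ht
      have hjsub : j + 1 ∈ subUsed L t := mem_subUsed.2 (Or.inr ⟨j, hj, ht, rfl⟩)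
      have hidx : (sl (subUsed L t)).idxOf (j + 1) < (subUsed L t).card :=
        sl_indexOf_lt hjsub
      have hcard := words_card_subUsed hred htree hht hg hL hts
      obtain ⟨v, hv, hvj⟩ := (hg t hts).2.1 ((sl (subUsed L t)).idxOf (j + 1)) (by omega)
      refine ⟨hts, v, hv, ?_⟩
      rw [invC_eq_on (g := g) (L := L) hred htree hht hts hv, hvj, sl_getD_indexOf hjsub]

end WithColouring

end WithHyps

end Main

end Stmt15Aux

section Statements

variable {R : Type*} {A : Type*} [CommRing R] [AddCommGroup A] [Module R A]
variable {ι : Type*} [Fintype ι] [DecidableEq ι] {n : ℕ}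

theorem stmt15 {ι : Type*} [Fintype ι] [DecidableEq ι] {n : ℕ} (part : ι → Fin n)
    (F : Finset (Finset ι)) (hred : IsReducedForest Finset.univ F)
    (htree : IsTreeF Finset.univ F) (hmix : IsMixingForest Finset.univ F part)
    (hht : 2 ≤ forestHeight Finset.univ F)
    (g : Finset ι → (Finset ι → ℕ) × ℕ)
    (hg : ∀ s ∈ rootsF Finset.univ (F.erase Finset.univ),
      IsGapFreeColouring s (F.filter fun t => t ⊆ s) (g s).1 (g s).2) :
    ∑ᶠ p ∈ {p ∈ ColouringSet Finset.univ F part |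
        ∀ s ∈ rootsF Finset.univ (F.erase Finset.univ),
          projColouring s (F.filter fun t => t ⊆ s) p.1 = g s},
      (-1 : ℤ) ^ p.2 =
    -(-1 : ℤ) ^ (∑ s ∈ rootsF Finset.univ (F.erase Finset.univ), (g s).2) := by
  classical
  open Stmt15Aux in
  have hSeq : {p ∈ ColouringSet Finset.univ F part |
        ∀ s ∈ rootsF Finset.univ (F.erase Finset.univ),
          projColouring s (F.filter fun t => t ⊆ s) p.1 = g s}
      = (fun L => (invC F g L, L.length + 1)) '' WordsSet (MM F g) := by
    ext ⟨c, r⟩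
    constructor
    · rintro ⟨⟨hgf, hwm⟩, hpr⟩
      refine ⟨PhiW F (c, r), PhiW_mem_words hred htree hht hg hgf hpr, ?_⟩
      have h1 : invC F g (PhiW F (c, r)) = c := left_inv_col hred htree hht hg hgf hpr
      have hrpos : 1 ≤ r := col_r_pos hred htree hht hgf
      have h2 : (PhiW F (c, r)).length + 1 = r := by rw [PhiW_length]; omega
      show (invC F g (PhiW F (c, r)), (PhiW F (c, r)).length + 1) = (c, r)
      rw [h1, h2]
    · rintro ⟨L, hL, heq⟩
      have hgf := invC_gapfree hred htree hht hg hL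
      rw [← heq]
      exact ⟨⟨hgf, weak_mixing_auto hred htree hht hg hmix hgf⟩,
        fun s hs => invC_proj hred htree hht hg hL hs⟩
  rw [hSeq]
  have hW := Stmt15Aux.wordsSet_aux (Multiset.card (Stmt15Aux.MM F g)) (Stmt15Aux.MM F g) le_rfl
  obtain ⟨hWfin, hWsum⟩ := hW
  have hinj : (Stmt15Aux.WordsSet (Stmt15Aux.MM F g)).InjOn
      (fun L => (Stmt15Aux.invC F g L, L.length + 1)) := by
    intro L1 h1 L2 h2 heq
    have e1 := Stmt15Aux.right_inv_word hred htree hht hg h1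
    have e2 := Stmt15Aux.right_inv_word hred htree hht hg h2
    simp only at heq
    rw [← e1, ← e2, heq]
  rw [finsum_mem_image hinj]
  rw [finsum_mem_eq_finite_toFinset_sum _ hWfin] at hWsum
  rw [finsum_mem_eq_finite_toFinset_sum _ hWfin]
  have hstep : ∑ L ∈ hWfin.toFinset, ((-1 : ℤ) ^ ((fun L => (Stmt15Aux.invC F g L, L.length + 1)) L).2)
      = -∑ L ∈ hWfin.toFinset, ((-1 : ℤ) ^ L.length) := by
    rw [← Finset.sum_neg_distrib]
    refine Finset.sum_congr rfl fun L _ => ?_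
    simp [pow_succ]
  rw [hstep, hWsum, Stmt15Aux.card_MM]

end Statements
end

section
/- Fix r ≥ 1. For every x = (x_1,…,x_r) ∈ ℕ^r, Σ_{ρ ∈ P_x} (−1)^{|ρ|+1} = −(−1)^{x_1 + ⋯ + x_r}; in particular the signed sum over all lattice paths from the origin to x with steps in {0,1}^r ∖ {0} depends only on the parity of x_1 + ⋯ + x_r. -/
/-- For `x ∈ ℕ^r`, `latticePaths x` is the set of lattice paths from the origin to `x`:
finite sequences of steps in `{0,1}^r \ {0}` summing to `x`.  The number of steps of a
path `ρ` is `ρ.length`. -/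
def latticePaths {r : ℕ} (x : Fin r → ℕ) : Set (List (Fin r → ℕ)) :=
  {ρ | (∀ s ∈ ρ, (∀ i, s i ≤ 1) ∧ s ≠ 0) ∧ ρ.sum = x}

/-!
Splitting off the first step `s`, a nonzero `0/1`-vector below `x`, gives the recursion
`f x = -∑ₛ f (x - s)` for the signed count `f`. By induction `-f (x - s) = (-1)^|x| (-1)^|s|`,
and for `x ≠ 0` the alternating sum `∑ₛ (-1)^|s|` is `-1`: including `s = 0`, it factors over
the coordinates, and a coordinate with `x i ≠ 0` contributes `1 - 1 = 0`.
-/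

open Finset

section

variable {ι : Type*} [Fintype ι] [DecidableEq ι]

theorem sum_Iic_neg_one_pow_sum_eq_zero {y : ι → ℕ} {i : ι} (hi : y i = 1) :
    ∑ s ∈ Iic y, (-1 : ℤ) ^ (∑ j, s j) = 0 := by
  have hIic : Iic y = Fintype.piFinset fun j => Iic (y j) := by
    ext s; simp [Pi.le_def]
  calc ∑ s ∈ Iic y, (-1 : ℤ) ^ (∑ j, s j)
      = ∏ j, ∑ k ∈ Iic (y j), (-1 : ℤ) ^ k := by
        simp only [hIic, prod_univ_sum, prod_pow_eq_pow_sum]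
    _ = 0 := prod_eq_zero (mem_univ i) (by rw [hi]; decide)

end

section

variable {r : ℕ}

def latticeSteps (x : Fin r → ℕ) : Finset (Fin r → ℕ) := (Iic (x ⊓ 1)).erase 0

theorem mem_latticeSteps {x s : Fin r → ℕ} :
    s ∈ latticeSteps x ↔ ((∀ i, s i ≤ 1) ∧ s ≠ 0) ∧ s ≤ x := by
  simp only [latticeSteps, mem_erase, mem_Iic, le_inf_iff, Pi.le_def, Pi.one_apply]
  tauto

theorem sum_latticeSteps_neg_one_pow_sum {x : Fin r → ℕ} (hx : x ≠ 0) :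
    ∑ s ∈ latticeSteps x, (-1 : ℤ) ^ (∑ i, s i) = -1 := by
  obtain ⟨i, hi⟩ := Function.ne_iff.mp hx
  have h := sum_Iic_neg_one_pow_sum_eq_zero (y := x ⊓ 1) (i := i) (by simp at hi ⊢; omega)
  rw [← add_sum_erase _ _ (mem_Iic.mpr (zero_le : 0 ≤ x ⊓ 1))] at h
  simp only [Pi.zero_apply, sum_const_zero, pow_zero] at h
  rw [latticeSteps]
  linarith

theorem nil_mem_latticePaths_iff {x : Fin r → ℕ} : [] ∈ latticePaths x ↔ x = 0 := by
  simp [latticePaths, eq_comm]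

theorem cons_mem_latticePaths_iff {x s : Fin r → ℕ} {ρ : List (Fin r → ℕ)} :
    s :: ρ ∈ latticePaths x ↔ s ∈ latticeSteps x ∧ ρ ∈ latticePaths (x - s) := by
  have hsum : s + ρ.sum = x ↔ s ≤ x ∧ ρ.sum = x - s := by
    constructor
    · rintro rfl; exact ⟨le_self_add, (add_tsub_cancel_left s _).symm⟩
    · rintro ⟨hle, h⟩; rw [h, add_tsub_cancel_of_le hle]
  simp only [latticePaths, Set.mem_ofPred_eq, List.forall_mem_cons, List.sum_cons, hsum,
    mem_latticeSteps]
  tauto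

theorem latticePaths_zero : latticePaths (0 : Fin r → ℕ) = {[]} := by
  ext (_ | ⟨s, ρ⟩)
  · simp [nil_mem_latticePaths_iff]
  · simp [cons_mem_latticePaths_iff, mem_latticeSteps]

theorem latticePaths_eq_biUnion {x : Fin r → ℕ} (hx : x ≠ 0) :
    latticePaths x =
      ⋃ s ∈ (latticeSteps x : Set (Fin r → ℕ)), (s :: ·) '' latticePaths (x - s) := by
  ext (_ | ⟨s, ρ⟩)
  · simp [nil_mem_latticePaths_iff, hx]
  · simp [cons_mem_latticePaths_iff, and_comm]

theorem sub_lt_of_mem_latticeSteps {x s : Fin r → ℕ} (hs : s ∈ latticeSteps x) :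
    x - s < x := by
  obtain ⟨⟨-, hs0⟩, hsx⟩ := mem_latticeSteps.mp hs
  refine lt_of_le_of_ne tsub_le_self fun h => hs0 ?_
  have := tsub_add_cancel_of_le hsx
  rw [h] at this
  exact left_eq_add.mp this.symm

theorem latticePaths_finite (x : Fin r → ℕ) : (latticePaths x).Finite := by
  induction x using WellFoundedLT.induction with
  | _ x ih =>
  rcases eq_or_ne x 0 with rfl | hx
  · simp [latticePaths_zero]
  · rw [latticePaths_eq_biUnion hx]
    exact (latticeSteps x).finite_toSet.biUnion fun s hs =>
      (ih _ (sub_lt_of_mem_latticeSteps hs)).image _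

theorem finsum_mem_latticePaths {M : Type*} [AddCommMonoid M] (f : List (Fin r → ℕ) → M)
    {x : Fin r → ℕ} (hx : x ≠ 0) :
    ∑ᶠ ρ ∈ latticePaths x, f ρ =
      ∑ s ∈ latticeSteps x, ∑ᶠ ρ ∈ latticePaths (x - s), f (s :: ρ) := by
  have hdisj : (latticeSteps x : Set (Fin r → ℕ)).PairwiseDisjoint
      fun s => (s :: ·) '' latticePaths (x - s) := by
    intro s _ t _ hst
    simp only [Function.onFun, Set.disjoint_left, Set.mem_image]
    rintro _ ⟨ρ, -, rfl⟩ ⟨σ, -, h⟩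
    exact hst (List.cons_eq_cons.mp h).1.symm
  rw [latticePaths_eq_biUnion hx, finsum_mem_biUnion hdisj (finite_toSet _)
    fun s _ => (latticePaths_finite _).image _, finsum_mem_coe_finset]
  exact sum_congr rfl fun s _ => finsum_mem_image List.cons_injective.injOn

theorem neg_one_pow_sum_sub {x s : Fin r → ℕ} (hsx : s ≤ x) :
    (-1 : ℤ) ^ (∑ i, (x - s) i) = (-1) ^ (∑ i, x i) * (-1) ^ (∑ i, s i) := by
  have hsum : ∑ i, x i = ∑ i, (x - s) i + ∑ i, s i := by
    rw [← sum_add_distrib]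
    exact sum_congr rfl fun i _ => (tsub_add_cancel_of_le (hsx i)).symm
  rw [hsum, pow_add, mul_assoc, ← pow_add, ← two_mul, pow_mul]
  norm_num

end

theorem signed_lattice_path_count_general {r : ℕ} (x : Fin r → ℕ) :
    ∑ᶠ ρ ∈ latticePaths x, (-1 : ℤ) ^ (ρ.length + 1) =
      -(-1 : ℤ) ^ (∑ i, x i) := by
  induction x using WellFoundedLT.induction with
  | _ x ih =>
  rcases eq_or_ne x 0 with rfl | hx
  · simp [latticePaths_zero]
  have hstep : ∀ s ∈ latticeSteps x,
      ∑ᶠ ρ ∈ latticePaths (x - s), (-1 : ℤ) ^ ((s :: ρ).length + 1) =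
        (-1) ^ (∑ i, x i) * (-1) ^ (∑ i, s i) := fun s hs => by
    simp only [List.length_cons, pow_succ _ (_ + 1), mul_neg_one,
      finsum_mem_neg_distrib _ (latticePaths_finite _), ih _ (sub_lt_of_mem_latticeSteps hs),
      neg_neg, neg_one_pow_sum_sub (mem_latticeSteps.mp hs).2]
  rw [finsum_mem_latticePaths _ hx, sum_congr rfl hstep, ← mul_sum,
    sum_latticeSteps_neg_one_pow_sum hx, mul_neg_one]

/-- the signed count of lattice paths from the origin to `x` with steps in
`{0,1}^r \ {0}`, each path `ρ` counted with sign `(-1)^{|ρ|+1}`, equals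
`-(-1)^{x₁ + ⋯ + x_r}`; in particular it depends only on the parity of `x₁ + ⋯ + x_r`. -/
theorem signed_lattice_path_count {r : ℕ} (hr : 1 ≤ r) (x : Fin r → ℕ) :
    ∑ᶠ ρ ∈ latticePaths x, (-1 : ℤ) ^ (ρ.length + 1) =
      -(-1 : ℤ) ^ (∑ i, x i) :=
  signed_lattice_path_count_general x
end
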